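/- Let V be a real Hilbert space, r > 0, and F : B_r → ℝ a C² function on the ball B_r of radius r centered at 0, satisfying: F(0) = c, F(ψ) > c for all ψ ∈ B_r \ {0}, and there exist C > 0 and an orthogonal projection P : V → V whose kernel is finite-dimensional such that D²F(0)(ψ,ψ) ≥ C‖Pψ‖² for all ψ ∈ V. Then there exists ρ ∈ (0, r) such that: for any sequence ψ_ν ∈ B_ρ with F(ψ_ν) → c, one has ‖ψ_ν‖ → 0. -/

import Mathlib

open Filter Topology Set Metric

/-!
Near `0` the Hessian of `F` stays coercive in the directions of `range P`, up to an error
controlled by the `ker P`-component. Since `F ≥ c` at midpoints, the midpoint second difference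
then gives `‖x - y‖² ≲ (F x - c) + (F y - c) + ‖(1 - P) (x - y)‖²` on a small ball. Given
`F ψ_ν → c`, pass to a subsequence whose `ker P`-components converge (the kernel is
finite-dimensional); the estimate makes it Cauchy, and its limit `z` has `F z = c`, so `z = 0`.
Since every subsequence has a further subsequence tending to `0`, so does `ψ_ν`.
-/

theorem div_four_le_add_sub_two_mul_of_le_deriv2 {g g' g'' : ℝ → ℝ} {a : ℝ}
    (hg : ContinuousOn g (Icc 0 1)) (hg' : ∀ t ∈ Ioo (0 : ℝ) 1, HasDerivAt g (g' t) t)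
    (hg'' : ∀ t ∈ Ioo (0 : ℝ) 1, HasDerivAt g' (g'' t) t) (ha : ∀ t ∈ Ioo (0 : ℝ) 1, a ≤ g'' t) :
    a / 4 ≤ g 0 + g 1 - 2 * g (1 / 2) := by
  have hconv : ConvexOn ℝ (Icc 0 1) fun t => g t - a / 2 * t ^ 2 := by
    refine convexOn_of_hasDerivWithinAt2_nonneg (f' := fun t => g' t - a * t)
      (f'' := fun t => g'' t - a) (convex_Icc 0 1) (hg.sub (by fun_prop)) ?_ ?_ ?_ <;>
      rw [interior_Icc] <;> intro t ht
    · have hsq : HasDerivAt (fun t : ℝ => a / 2 * t ^ 2) (a * t) t :=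
        ((hasDerivAt_pow 2 t).const_mul (a / 2)).congr_deriv (by ring)
      exact ((hg' t ht).sub hsq).hasDerivWithinAt
    · exact ((hg'' t ht).sub (by simpa using (hasDerivAt_id t).const_mul a)).hasDerivWithinAt
    · linarith [ha t ht]
  have := hconv.2 (left_mem_Icc.2 zero_le_one) (right_mem_Icc.2 zero_le_one)
    (by norm_num : (0 : ℝ) ≤ 1 / 2) (by norm_num : (0 : ℝ) ≤ 1 / 2) (by norm_num)
  norm_num at this
  linarith

theorem norm_sq_le_two_mul_add_norm_sub_sq {G : Type*} [SeminormedAddCommGroup G] (a b : G) :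
    ‖a‖ ^ 2 ≤ 2 * (‖b‖ ^ 2 + ‖a - b‖ ^ 2) :=
  (pow_le_pow_left₀ (norm_nonneg _) (norm_le_insert' a b) 2).trans add_sq_le

section

variable {E : Type*} [NormedAddCommGroup E] [NormedSpace ℝ E]

theorem ContDiffOn.div_four_le_add_sub_two_mul_midpoint
    {F : E → ℝ} {s : Set E} {x y : E} {a : ℝ} (hs : IsOpen s)
    (hF : ContDiffOn ℝ 2 F s) (hxy : segment ℝ x y ⊆ s)
    (ha : ∀ z ∈ segment ℝ x y, a ≤ fderiv ℝ (fderiv ℝ F) z (y - x) (y - x)) :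
    a / 4 ≤ F x + F y - 2 * F (midpoint ℝ x y) := by
  have hγ : ∀ t ∈ Icc (0 : ℝ) 1, AffineMap.lineMap x y t ∈ segment ℝ x y := fun t ht =>
    segment_eq_image_lineMap ℝ x y ▸ mem_image_of_mem _ ht
  have hF' : ContDiffOn ℝ 1 (fderiv ℝ F) s := hF.fderiv_of_isOpen hs (by norm_num)
  have hdiff : ∀ z ∈ s, DifferentiableAt ℝ F z := fun z hz =>
    (hF.contDiffAt (hs.mem_nhds hz)).differentiableAt (by norm_num)
  have hdiff' : ∀ z ∈ s, DifferentiableAt ℝ (fderiv ℝ F) z := fun z hz =>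
    (hF'.contDiffAt (hs.mem_nhds hz)).differentiableAt one_ne_zero
  have key := div_four_le_add_sub_two_mul_of_le_deriv2
    (g := fun t => F (AffineMap.lineMap x y t))
    (g' := fun t => fderiv ℝ F (AffineMap.lineMap x y t) (y - x))
    (g'' := fun t => fderiv ℝ (fderiv ℝ F) (AffineMap.lineMap x y t) (y - x) (y - x)) (a := a)
    (hF.continuousOn.comp (by fun_prop) fun t ht => hxy (hγ t ht))
    (fun t ht => (hdiff _ (hxy (hγ t (Ioo_subset_Icc_self ht)))).hasFDerivAt.comp_hasDerivAt t
      AffineMap.hasDerivAt_lineMap)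
    (fun t ht => by
      simpa using ((hdiff' _ (hxy (hγ t (Ioo_subset_Icc_self ht)))).hasFDerivAt.comp_hasDerivAt t
        AffineMap.hasDerivAt_lineMap).clm_apply (hasDerivAt_const t (y - x)))
    (fun t ht => ha _ (hγ t (Ioo_subset_Icc_self ht)))
  simpa [lineMap_inv_two] using key

theorem ContinuousLinearMap.half_mul_sub_le_apply_apply_of_norm_sub_le
    {B B₀ : E →L[ℝ] E →L[ℝ] ℝ} {P : E →L[ℝ] E} {C : ℝ}
    (hB₀ : ∀ d, C * ‖P d‖ ^ 2 ≤ B₀ d d) (hB : ‖B - B₀‖ ≤ C / 4) (d : E) :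
    C / 2 * (‖P d‖ ^ 2 - ‖d - P d‖ ^ 2) ≤ B d d := by
  have hC : 0 ≤ C := by linarith [norm_nonneg (B - B₀)]
  have hpert : -(C / 4 * ‖d‖ ^ 2) ≤ (B - B₀) d d := by
    refine neg_le_of_abs_le ((le_opNorm₂ (B - B₀) d d).trans ?_)
    rw [sq, ← mul_assoc]
    gcongr
  have hsplit := norm_sq_le_two_mul_add_norm_sub_sq d (P d)
  have := hB₀ d
  simp only [sub_apply] at hpert
  nlinarith

theorem exists_radius_midpoint_estimate {F : E → ℝ} {r C : ℝ} (hr : 0 < r) (hC : 0 < C)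
    (hF : ContDiffOn ℝ 2 F (ball 0 r)) {P : E →L[ℝ] E}
    (hP : ∀ d, C * ‖P d‖ ^ 2 ≤ fderiv ℝ (fderiv ℝ F) 0 d d) :
    ∃ ρ, 0 < ρ ∧ ρ < r ∧ ∀ x ∈ closedBall (0 : E) ρ, ∀ y ∈ closedBall (0 : E) ρ,
      C / 8 * (‖P (y - x)‖ ^ 2 - ‖(y - x) - P (y - x)‖ ^ 2) ≤
        F x + F y - 2 * F (midpoint ℝ x y) := by
  have hcont : ContinuousAt (fderiv ℝ (fderiv ℝ F)) 0 :=
    ((hF.fderiv_of_isOpen isOpen_ball (by norm_num)).continuousOn_fderiv_of_isOpen isOpen_ball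
      le_rfl).continuousAt (ball_mem_nhds 0 hr)
  have hnear : ∀ᶠ z in 𝓝 (0 : E),
      z ∈ ball (0 : E) r ∧ ‖fderiv ℝ (fderiv ℝ F) z - fderiv ℝ (fderiv ℝ F) 0‖ ≤ C / 4 :=
    (isOpen_ball.eventually_mem (mem_ball_self hr)).and <|
      (Metric.tendsto_nhds.1 (by exact hcont) (C / 4) (by positivity)).mono fun z hz =>
        (dist_eq_norm (fderiv ℝ (fderiv ℝ F) z) _ ▸ hz).le
  obtain ⟨ε, hε, hεnear⟩ := nhds_basis_closedBall.eventually_iff.1 hnear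
  refine ⟨min ε (r / 2), by positivity, (min_le_right _ _).trans_lt (by linarith),
    fun x hx y hy => ?_⟩
  have hseg : segment ℝ x y ⊆ closedBall 0 ε :=
    ((convex_closedBall _ _).segment_subset hx hy).trans
      (closedBall_subset_closedBall (min_le_left _ _))
  have := hF.div_four_le_add_sub_two_mul_midpoint isOpen_ball
    (fun z hz => (hεnear (hseg hz)).1) fun z hz =>
    ContinuousLinearMap.half_mul_sub_le_apply_apply_of_norm_sub_le hP (hεnear (hseg hz)).2 _
  linarith

theorem exists_radius_sq_norm_sub_le {F : E → ℝ} {r c C : ℝ} (hr : 0 < r) (hC : 0 < C)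
    (hF : ContDiffOn ℝ 2 F (ball 0 r)) (hFc : ∀ x ∈ ball (0 : E) r, c ≤ F x) {P : E →L[ℝ] E}
    (hP : ∀ d, C * ‖P d‖ ^ 2 ≤ fderiv ℝ (fderiv ℝ F) 0 d d) :
    ∃ ρ, 0 < ρ ∧ ρ < r ∧ ∀ x ∈ closedBall (0 : E) ρ, ∀ y ∈ closedBall (0 : E) ρ,
      ‖x - y‖ ^ 2 ≤ 16 / C * ((F x - c) + (F y - c)) + 4 * ‖(x - P x) - (y - P y)‖ ^ 2 := by
  obtain ⟨ρ, hρ, hρr, hmid⟩ := exists_radius_midpoint_estimate hr hC hF hP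
  refine ⟨ρ, hρ, hρr, fun x hx y hy => ?_⟩
  have hc : c ≤ F (midpoint ℝ x y) :=
    hFc _ (closedBall_subset_ball hρr ((convex_closedBall _ _).midpoint_mem hx hy))
  have hq : (y - x) - P (y - x) = -((x - P x) - (y - P y)) := by rw [map_sub]; abel
  have hPd : ‖P (y - x)‖ ^ 2 ≤
      8 / C * ((F x - c) + (F y - c)) + ‖(x - P x) - (y - P y)‖ ^ 2 := by
    have h := hmid x hx y hy
    rw [hq, norm_neg] at h
    rw [div_mul_eq_mul_div, ← sub_le_iff_le_add, le_div_iff₀ hC]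
    linarith
  have := norm_sq_le_two_mul_add_norm_sub_sq (y - x) (P (y - x))
  rw [hq, norm_neg, ← norm_neg, neg_sub] at this
  linarith [show 16 / C * ((F x - c) + (F y - c)) = 2 * (8 / C * ((F x - c) + (F y - c))) by ring]

theorem Submodule.exists_subseq_tendsto_of_norm_le (K : Submodule ℝ E) [FiniteDimensional ℝ K]
    {x : ℕ → E} (hxK : ∀ n, x n ∈ K) {R : ℝ} (hxR : ∀ n, ‖x n‖ ≤ R) :
    ∃ a, ∃ φ : ℕ → ℕ, StrictMono φ ∧ Tendsto (x ∘ φ) atTop (𝓝 a) := by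
  obtain ⟨a, -, φ, hφ, ha⟩ :=
    tendsto_subseq_of_bounded (isBounded_closedBall (x := (0 : K)) (r := R))
      (x := fun n => ⟨x n, hxK n⟩) fun n => by simpa using hxR n
  exact ⟨a, φ, hφ, (continuous_subtype_val.tendsto a).comp ha⟩

end

theorem cauchySeq_of_sq_dist_le {X Y : Type*} [PseudoMetricSpace X] [PseudoMetricSpace Y]
    {φ : ℕ → X} {w : ℕ → Y} {e : ℕ → ℝ} {K L : ℝ} (he : Tendsto e atTop (𝓝 0))
    (hw : CauchySeq w)
    (h : ∀ m n, dist (φ m) (φ n) ^ 2 ≤ K * (e m + e n) + L * dist (w m) (w n) ^ 2) :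
    CauchySeq φ := by
  rw [cauchySeq_iff_tendsto_dist_atTop_0] at hw ⊢
  have he₂ : Tendsto (fun p : ℕ × ℕ => e p.1 + e p.2) atTop (𝓝 0) := by
    rw [← prod_atTop_atTop_eq]
    simpa using (he.comp tendsto_fst).add (he.comp tendsto_snd)
  have hsq : Tendsto (fun p : ℕ × ℕ => dist (φ p.1) (φ p.2) ^ 2) atTop (𝓝 0) :=
    squeeze_zero (fun _ => sq_nonneg _) (fun p => h p.1 p.2) <| by
      simpa using (he₂.const_mul K).add ((hw.pow 2).const_mul L)
  simpa [Real.sqrt_sq dist_nonneg] using hsq.sqrt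

theorem stmt14_general {V : Type*} [NormedAddCommGroup V] [InnerProductSpace ℝ V]
    [CompleteSpace V] (r c C : ℝ) (hr : 0 < r) (hC : 0 < C) (F : V → ℝ)
    (hF : ContDiffOn ℝ 2 F (Metric.ball 0 r))
    (hF0 : F 0 = c)
    (hFpos : ∀ ψ ∈ Metric.ball (0 : V) r, ψ ≠ 0 → c < F ψ)
    (P : V →L[ℝ] V)
    (hidem : ∀ x, P (P x) = P x)
    (hker : FiniteDimensional ℝ (LinearMap.ker (P : V →ₗ[ℝ] V)))
    (hbound : ∀ ψ : V, C * ‖P ψ‖ ^ 2 ≤ iteratedFDeriv ℝ 2 F 0 ![ψ, ψ]) :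
    ∃ ρ : ℝ, 0 < ρ ∧ ρ < r ∧
      ∀ ψ : ℕ → V, (∀ ν, ψ ν ∈ Metric.closedBall (0 : V) ρ) →
        Tendsto (fun ν => F (ψ ν)) atTop (nhds c) →
        Tendsto (fun ν => ‖ψ ν‖) atTop (nhds 0) := by
  have hFc : ∀ x ∈ ball (0 : V) r, c ≤ F x := fun x hx =>
    (eq_or_ne x 0).elim (fun h => h ▸ hF0.ge) fun h => (hFpos x hx h).le
  obtain ⟨ρ, hρ, hρr, hest⟩ := exists_radius_sq_norm_sub_le hr hC hF hFc fun d => by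
    simpa [iteratedFDeriv_two_apply] using hbound d
  refine ⟨ρ, hρ, hρr, fun ψ hψ hFψ => ?_⟩
  suffices Tendsto ψ atTop (𝓝 0) by simpa using this.norm
  refine tendsto_of_subseq_tendsto fun ns hns => ?_
  have hψρ : ∀ n, ‖ψ n‖ ≤ ρ := fun n => mem_closedBall_zero_iff.1 (hψ n)
  obtain ⟨w, ms, hms, hw⟩ := (LinearMap.ker (P : V →ₗ[ℝ] V)).exists_subseq_tendsto_of_norm_le
    (x := fun k => ψ (ns k) - P (ψ (ns k))) (fun k => by simp [hidem])
    (R := ρ + ‖P‖ * ρ) fun k => (norm_sub_le _ _).trans <|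
      add_le_add (hψρ _) (P.le_opNorm_of_le (hψρ _))
  have hFφ : Tendsto (fun k => F (ψ (ns (ms k)))) atTop (𝓝 c) :=
    hFψ.comp (hns.comp hms.tendsto_atTop)
  have hφ : CauchySeq fun k => ψ (ns (ms k)) :=
    cauchySeq_of_sq_dist_le (by simpa using hFφ.sub_const c) hw.cauchySeq fun m n => by
      simpa only [dist_eq_norm, Function.comp_apply] using hest _ (hψ _) _ (hψ _)
  obtain ⟨z, hz⟩ := cauchySeq_tendsto_of_complete hφ
  have hzr : z ∈ ball (0 : V) r :=
    closedBall_subset_ball hρr (isClosed_closedBall.mem_of_tendsto hz (.of_forall fun k => hψ _))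
  have hFz : F z = c := tendsto_nhds_unique
    ((hF.continuousOn.continuousAt (isOpen_ball.mem_nhds hzr)).tendsto.comp hz) hFφ
  obtain rfl : z = 0 := by_contra fun h => (hFpos z hzr h).ne' hFz
  exact ⟨ms, hz⟩

/-- Abstract orbital-stability lemma (Proposition 3.8.3): on a real Hilbert
space `V`, let `F` be `C²` on the ball `B_r`, with `F(0) = c`, `F > c` on
`B_r \ {0}`, and suppose there are `C > 0` and an orthogonal projection `P`
with finite-dimensional kernel such that `D²F(0)(ψ,ψ) ≥ C‖Pψ‖²`. Then there
is `ρ ∈ (0, r)` such that any sequence `ψ_ν ∈ B_ρ` with `F(ψ_ν) → c`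
satisfies `‖ψ_ν‖ → 0`. -/
theorem stmt14 {V : Type*} [NormedAddCommGroup V] [InnerProductSpace ℝ V]
    [CompleteSpace V] (r c C : ℝ) (hr : 0 < r) (hC : 0 < C) (F : V → ℝ)
    (hF : ContDiffOn ℝ 2 F (Metric.ball 0 r))
    (hF0 : F 0 = c)
    (hFpos : ∀ ψ ∈ Metric.ball (0 : V) r, ψ ≠ 0 → c < F ψ)
    (P : V →L[ℝ] V)
    (hidem : ∀ x, P (P x) = P x)
    (hsym : ∀ x y : V, inner ℝ (P x) y = (inner ℝ x (P y) : ℝ))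
    (hker : FiniteDimensional ℝ (LinearMap.ker (P : V →ₗ[ℝ] V)))
    (hbound : ∀ ψ : V, C * ‖P ψ‖ ^ 2 ≤ iteratedFDeriv ℝ 2 F 0 ![ψ, ψ]) :
    ∃ ρ : ℝ, 0 < ρ ∧ ρ < r ∧
      ∀ ψ : ℕ → V, (∀ ν, ψ ν ∈ Metric.closedBall (0 : V) ρ) →
        Tendsto (fun ν => F (ψ ν)) atTop (nhds c) →
        Tendsto (fun ν => ‖ψ ν‖) atTop (nhds 0) :=
  stmt14_general r c C hr hC F hF hF0 hFpos P hidem hker hbound
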